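/- arXiv:2011.07155 — 7 statements merged into one kernel-verified Lean document; each statement's English description precedes it below -/
import Mathlib

section
/- For all real numbers α, β ≥ 0, the supremum over x > 0 of α/(1+x) − β/x equals (√α − √β)₊², where (·)₊ denotes the positive part. -/
/-! Write α = a², β = b² with a, b ≥ 0. For a > b, Titu's inequality
a²/(1 + x) ≤ (a - b)²/1 + b²/x bounds the function by (a - b)², with equality at
x₀ = b/(a - b) (which is 0 when b = 0, so the supremum is then only a limit as x → 0⁺).
For a ≤ b the function is negative and tends to 0 as x → ∞. -/

open Filter Topology Set

theorem csSup_image_eq_of_tendsto {ι β : Type*} [ConditionallyCompleteLinearOrder β]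
    [TopologicalSpace β] [OrderClosedTopology β] {f : ι → β} {s : Set ι} {l : Filter ι}
    [l.NeBot] {M : β} (hle : ∀ x ∈ s, f x ≤ M) (hs : ∀ᶠ x in l, x ∈ s)
    (hf : Tendsto f l (𝓝 M)) : sSup (f '' s) = M := by
  refine IsLUB.csSup_eq ⟨forall_mem_image.2 hle, fun u hu => ?_⟩ (Nonempty.image f hs.exists)
  exact le_of_tendsto hf (hs.mono fun x hx => hu (mem_image_of_mem f hx))

theorem add_sq_div_add_le (u v : ℝ) {p q : ℝ} (hp : 0 < p) (hq : 0 < q) :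
    (u + v) ^ 2 / (p + q) ≤ u ^ 2 / p + v ^ 2 / q := by
  rw [div_add_div _ _ hp.ne' hq.ne', div_le_div_iff₀ (by positivity) (by positivity)]
  nlinarith [sq_nonneg (u * q - v * p), mul_pos hp hq]

theorem sq_div_one_add_sub_sq_div_le {a x : ℝ} (b : ℝ) (ha : 0 ≤ a) (hx : 0 < x) :
    a ^ 2 / (1 + x) - b ^ 2 / x ≤ max (a - b) 0 ^ 2 := by
  rcases le_total a b with hab | hba
  · have : a ^ 2 / (1 + x) ≤ b ^ 2 / x := by gcongr; linarith
    rw [max_eq_right (sub_nonpos.2 hab)]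
    linarith
  · rw [max_eq_left (sub_nonneg.2 hba), sub_le_iff_le_add]
    simpa using add_sq_div_add_le (a - b) b one_pos hx

theorem tendsto_sq_div_one_add_sub_sq_div {a b : ℝ} (hb : 0 ≤ b) (hba : b < a) :
    Tendsto (fun x => a ^ 2 / (1 + x) - b ^ 2 / x) (𝓝 (b / (a - b))) (𝓝 ((a - b) ^ 2)) := by
  have hab : 0 < a - b := sub_pos.2 hba
  have hcont : ContinuousAt (fun x => a ^ 2 / (1 + x) - b ^ 2 / x) (b / (a - b)) := by
    refine (continuousAt_const.div (continuousAt_const.add continuousAt_id) ?_).sub ?_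
    · exact (add_pos_of_pos_of_nonneg one_pos (div_nonneg hb hab.le)).ne'
    -- for b = 0 the point is x = 0, where b²/x = 0/x is still identically zero
    rcases hb.eq_or_lt with rfl | hb
    · exact (continuousAt_const (y := (0 : ℝ))).congr (Eventually.of_forall fun x => by simp)
    · exact continuousAt_const.div continuousAt_id (by positivity)
  convert hcont.tendsto using 2
  have h1 : 1 + b / (a - b) = a / (a - b) := by field_simp; ring
  -- also true at c = 0, as 0/0 = 0
  have h2 (c : ℝ) : c ^ 2 / (c / (a - b)) = c * (a - b) := by
    rw [div_div_eq_mul_div, mul_div_right_comm, sq, mul_self_div_self]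
  rw [h1, h2, h2]
  ring

theorem tendsto_div_one_add_sub_div_atTop (α β : ℝ) :
    Tendsto (fun x : ℝ => α / (1 + x) - β / x) atTop (𝓝 0) := by
  simpa using (tendsto_const_nhds.div_atTop (tendsto_atTop_add_const_left _ (1 : ℝ) tendsto_id)).sub
    (tendsto_const_nhds.div_atTop tendsto_id)

/-- For all real numbers α, β ≥ 0, the supremum over x > 0 of α/(1+x) − β/x equals
(√α − √β)₊². -/
theorem stmt_0 (α β : ℝ) (hα : 0 ≤ α) (hβ : 0 ≤ β) :
    sSup ((fun x : ℝ => α / (1 + x) - β / x) '' {x : ℝ | 0 < x}) =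
      (max (Real.sqrt α - Real.sqrt β) 0) ^ 2 := by
  obtain ⟨a, ha, rfl⟩ : ∃ a, 0 ≤ a ∧ α = a ^ 2 := ⟨_, Real.sqrt_nonneg α, (Real.sq_sqrt hα).symm⟩
  obtain ⟨b, hb, rfl⟩ : ∃ b, 0 ≤ b ∧ β = b ^ 2 := ⟨_, Real.sqrt_nonneg β, (Real.sq_sqrt hβ).symm⟩
  rw [Real.sqrt_sq ha, Real.sqrt_sq hb]
  have hle (x : ℝ) (hx : x ∈ {x : ℝ | 0 < x}) := sq_div_one_add_sub_sq_div_le b ha hx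
  rcases le_or_gt a b with hab | hba
  · rw [max_eq_right (sub_nonpos.2 hab)] at hle ⊢
    simpa using csSup_image_eq_of_tendsto hle (eventually_gt_atTop 0)
      (by simpa using tendsto_div_one_add_sub_div_atTop (a ^ 2) (b ^ 2))
  · have hx₀ : 0 ≤ b / (a - b) := div_nonneg hb (sub_pos.2 hba).le
    rw [max_eq_left (sub_pos.2 hba).le] at hle ⊢
    exact csSup_image_eq_of_tendsto (l := 𝓝[>] (b / (a - b))) hle
      (eventually_nhdsWithin_of_forall fun x hx => hx₀.trans_lt hx)
      ((tendsto_sq_div_one_add_sub_sq_div hb hba).mono_left nhdsWithin_le_nhds)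
end

section
/- Let ξ ∈ ℝ^k with all coordinates nonpositive and let α > 0. Then the supremum of ∑ᵢ ξᵢ/ζᵢ² over all ζ ∈ ℝ^k with strictly positive coordinates satisfying ∑ᵢ ζᵢ² = α equals −(1/α)(∑ᵢ √(−ξᵢ))². -/
/-!
Cauchy–Schwarz in Sedrakyan's form gives `(∑ √(-ξᵢ))² / α ≤ ∑ (-ξᵢ) / ζᵢ²` on the sphere
`∑ ζᵢ² = α`. Equality would need `ζᵢ² ∝ √(-ξᵢ)`, which is not admissible when some `ξᵢ = 0`;
the weights `ζᵢ² ∝ √(-ξᵢ) + ε` are, and their values tend to the bound as `ε → 0⁺`.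
-/

open Finset Filter Topology

variable {ι : Type*} [Fintype ι]

lemma sum_div_sq_le_neg_sq_sum_sqrt (ξ : ι → ℝ) (hξ : ∀ i, ξ i ≤ 0) {ζ : ι → ℝ}
    (hζ : ∀ i, 0 < ζ i) :
    ∑ i, ξ i / ζ i ^ 2 ≤ -(1 / ∑ i, ζ i ^ 2) * (∑ i, √(-ξ i)) ^ 2 := by
  have h := sq_sum_div_le_sum_sq_div univ (fun i ↦ √(-ξ i)) (g := fun i ↦ ζ i ^ 2)
    fun i _ ↦ by have := hζ i; positivity
  simp only [Real.sq_sqrt (neg_nonneg.2 (hξ _)), neg_div, sum_neg_distrib] at h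
  rw [neg_mul, one_div_mul_eq_div]
  linarith

lemma exists_sum_sq_eq_and_sum_div_sq_eq [Nonempty ι] (ξ : ι → ℝ) {α : ℝ} (hα : 0 < α)
    {a : ι → ℝ} (ha : ∀ i, 0 < a i) :
    ∃ ζ : ι → ℝ, (∀ i, 0 < ζ i) ∧ ∑ i, ζ i ^ 2 = α ∧
      ∑ i, ξ i / ζ i ^ 2 = (∑ i, a i) / α * ∑ i, ξ i / a i := by
  have hA : 0 < ∑ i, a i := sum_pos (fun i _ ↦ ha i) univ_nonempty
  have hsq : ∀ i, √(α * a i / ∑ j, a j) ^ 2 = α * a i / ∑ j, a j :=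
    fun i ↦ Real.sq_sqrt (by have := ha i; positivity)
  refine ⟨fun i ↦ √(α * a i / ∑ j, a j), fun i ↦ Real.sqrt_pos.2 (by have := ha i; positivity),
    ?_, ?_⟩
  · simp only [hsq, ← sum_div, ← mul_sum]
    field_simp
  · simp only [hsq, mul_sum]
    refine sum_congr rfl fun i _ ↦ ?_
    have := (ha i).ne'
    field_simp

lemma neg_sum_sqrt_le_sum_div_sqrt_add (ξ : ι → ℝ) (hξ : ∀ i, ξ i ≤ 0) {ε : ℝ} (hε : 0 < ε) :
    -∑ i, √(-ξ i) ≤ ∑ i, ξ i / (√(-ξ i) + ε) := by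
  rw [← sum_neg_distrib]
  refine sum_le_sum fun i _ ↦ ?_
  have hsq : √(-ξ i) ^ 2 = -ξ i := Real.sq_sqrt (neg_nonneg.2 (hξ i))
  have ht : 0 ≤ √(-ξ i) := Real.sqrt_nonneg _
  rw [le_div_iff₀ (by positivity)]
  nlinarith

theorem isLUB_sum_div_sq [Nonempty ι] (ξ : ι → ℝ) (hξ : ∀ i, ξ i ≤ 0) {α : ℝ} (hα : 0 < α) :
    IsLUB {s : ℝ | ∃ ζ : ι → ℝ, (∀ i, 0 < ζ i) ∧ (∑ i, ζ i ^ 2 = α) ∧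
        s = ∑ i, ξ i / ζ i ^ 2}
      (-(1 / α) * (∑ i, √(-ξ i)) ^ 2) := by
  set S := ∑ i, √(-ξ i)
  refine ⟨?_, fun b hb ↦ ?_⟩
  · rintro s ⟨ζ, hζ, rfl, rfl⟩
    exact sum_div_sq_le_neg_sq_sum_sqrt ξ hξ hζ
  have hlim : Tendsto (fun ε ↦ (S + Fintype.card ι * ε) / α * -S) (𝓝[>] 0)
      (𝓝 (-(1 / α) * S ^ 2)) := by
    have hcont : Continuous fun ε ↦ (S + Fintype.card ι * ε) / α * -S := by fun_prop
    convert (hcont.tendsto 0).mono_left nhdsWithin_le_nhds using 2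
    ring
  refine le_of_tendsto hlim (eventually_nhdsWithin_of_forall fun ε (hε : 0 < ε) ↦ ?_)
  obtain ⟨ζ, hζ, hsum, hval⟩ := exists_sum_sq_eq_and_sum_div_sq_eq ξ hα
    (a := fun i ↦ √(-ξ i) + ε) fun i ↦ by positivity
  refine le_trans ?_ (hb ⟨ζ, hζ, hsum, rfl⟩)
  rw [hval, sum_add_distrib, sum_const, card_univ, nsmul_eq_mul]
  exact mul_le_mul_of_nonneg_left (neg_sum_sqrt_le_sum_div_sqrt_add ξ hξ hε) (by positivity)

open Finset in
/-- Let ξ ∈ ℝ^k with all coordinates nonpositive and α > 0. Then the supremum of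
∑ᵢ ξᵢ/ζᵢ² over ζ with strictly positive coordinates and ∑ᵢ ζᵢ² = α equals
−(1/α)(∑ᵢ √(−ξᵢ))². -/
theorem stmt_1 (k : ℕ) (hk : 0 < k) (ξ : Fin k → ℝ) (hξ : ∀ i, ξ i ≤ 0)
    (α : ℝ) (hα : 0 < α) :
    sSup {s : ℝ | ∃ ζ : Fin k → ℝ, (∀ i, 0 < ζ i) ∧ (∑ i, (ζ i) ^ 2 = α) ∧
        s = ∑ i, ξ i / (ζ i) ^ 2} =
      -(1 / α) * (∑ i, Real.sqrt (-ξ i)) ^ 2 := by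
  have : Nonempty (Fin k) := ⟨⟨0, hk⟩⟩
  have h := isLUB_sum_div_sq ξ hξ hα
  exact h.csSup_eq h.nonempty
end

section
/- For every r ∈ [−1, 1], the integral over σ ∈ [−1, 1] of −r²/(1 + rσ) against the normalized semicircular density (2/π)√(1 − σ²) equals 2(√(1 − r²) − 1). -/
/-!
The integrand has the elementary antiderivative
`(2/π) (arcsin y + r √(1 - y²) - √(1 - r²) arcsin ((y + r)/(1 + r y)))`, whose derivative is
nonnegative on `(-1, 1)`; this gives integrability despite the singularity at `|r| = 1`, and the
fundamental theorem of calculus finishes, since the Möbius map `y ↦ (y + r)/(1 + r y)` fixes `±1`.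
-/

open Real Set intervalIntegral

lemma one_add_mul_pos_of_abs_le_of_abs_lt {r x : ℝ} (hr : |r| ≤ 1) (hx : |x| < 1) :
    0 < 1 + r * x := by
  have : |r * x| < 1 := by
    rw [abs_mul]
    exact mul_lt_one_of_nonneg_of_lt_one_right hr (abs_nonneg x) hx
  linarith [neg_abs_le (r * x)]

lemma hasDerivAt_sqrt_one_sub_sq {x : ℝ} (hx : |x| < 1) :
    HasDerivAt (fun y => √(1 - y ^ 2)) (-x / √(1 - x ^ 2)) x := by
  have hpos : 0 < 1 - x ^ 2 := sub_pos.2 ((sq_lt_one_iff_abs_lt_one x).2 hx)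
  refine (((hasDerivAt_pow 2 x).const_sub 1).sqrt hpos.ne').congr_deriv ?_
  field_simp
  ring

lemma hasDerivAt_mobius {r x : ℝ} (hx : 1 + r * x ≠ 0) :
    HasDerivAt (fun y => (y + r) / (1 + r * y)) ((1 - r ^ 2) / (1 + r * x) ^ 2) x := by
  have hnum : HasDerivAt (fun y => y + r) 1 x := (hasDerivAt_id x).add_const r
  have hden : HasDerivAt (fun y => 1 + r * y) r x := by
    simpa using ((hasDerivAt_id x).const_mul r).const_add 1
  refine (hnum.div hden hx).congr_deriv ?_
  ring

lemma one_sub_sq_mobius {r x : ℝ} (hx : 1 + r * x ≠ 0) :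
    1 - ((x + r) / (1 + r * x)) ^ 2 = (1 - x ^ 2) * (1 - r ^ 2) / (1 + r * x) ^ 2 := by
  rw [div_pow, one_sub_div (pow_ne_zero 2 hx)]
  ring

lemma hasDerivAt_arcsin_mobius {r x : ℝ} (hr : |r| < 1) (hx : |x| < 1) :
    HasDerivAt (fun y => arcsin ((y + r) / (1 + r * y)))
      (√(1 - r ^ 2) / ((1 + r * x) * √(1 - x ^ 2))) x := by
  have hden := one_add_mul_pos_of_abs_le_of_abs_lt hr.le hx
  have hx2 : 0 < 1 - x ^ 2 := sub_pos.2 ((sq_lt_one_iff_abs_lt_one x).2 hx)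
  have hr2 : 0 < 1 - r ^ 2 := sub_pos.2 ((sq_lt_one_iff_abs_lt_one r).2 hr)
  have hm : 0 < 1 - ((x + r) / (1 + r * x)) ^ 2 := by
    rw [one_sub_sq_mobius hden.ne']; positivity
  rw [sub_pos, sq_lt_one_iff_abs_lt_one, abs_lt] at hm
  have hsqrt : √(1 - ((x + r) / (1 + r * x)) ^ 2) = √(1 - x ^ 2) * √(1 - r ^ 2) / (1 + r * x) := by
    rw [one_sub_sq_mobius hden.ne', sqrt_div (by positivity), sqrt_mul hx2.le, sqrt_sq hden.le]
  refine ((hasDerivAt_arcsin hm.1.ne' hm.2.ne).comp x (hasDerivAt_mobius hden.ne')).congr_deriv ?_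
  rw [hsqrt]
  have : √(1 - r ^ 2) ^ 2 = 1 - r ^ 2 := sq_sqrt hr2.le
  field_simp
  rw [this]

/-- When `|r| = 1` the Möbius map takes the value `r = ±1`, where `arcsin` is not differentiable,
but then the coefficient `√(1 - r²)` vanishes. -/
lemma hasDerivAt_sqrt_mul_arcsin_mobius {r x : ℝ} (hr : |r| ≤ 1) (hx : |x| < 1) :
    HasDerivAt (fun y => √(1 - r ^ 2) * arcsin ((y + r) / (1 + r * y)))
      ((1 - r ^ 2) / ((1 + r * x) * √(1 - x ^ 2))) x := by
  rcases hr.lt_or_eq with hr | hr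
  · refine ((hasDerivAt_arcsin_mobius hr hx).const_mul √(1 - r ^ 2)).congr_deriv ?_
    rw [← mul_div_assoc, mul_self_sqrt (sub_nonneg.2 ((sq_le_one_iff_abs_le_one r).2 hr.le))]
  · have hr2 : 1 - r ^ 2 = 0 := by rw [← sq_abs, hr]; norm_num
    simpa [hr2] using hasDerivAt_const x (0 : ℝ)

noncomputable def semicirclePrimitive (r y : ℝ) : ℝ :=
  2 / π * (arcsin y + r * √(1 - y ^ 2) - √(1 - r ^ 2) * arcsin ((y + r) / (1 + r * y)))

lemma hasDerivAt_semicirclePrimitive {r x : ℝ} (hr : |r| ≤ 1) (hx : |x| < 1) :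
    HasDerivAt (semicirclePrimitive r) (r ^ 2 / (1 + r * x) * (2 / π * √(1 - x ^ 2))) x := by
  have hden := one_add_mul_pos_of_abs_le_of_abs_lt hr hx
  have hx2 : 0 < 1 - x ^ 2 := sub_pos.2 ((sq_lt_one_iff_abs_lt_one x).2 hx)
  have hsq : √(1 - x ^ 2) ^ 2 = 1 - x ^ 2 := sq_sqrt hx2.le
  have hx' := abs_lt.1 hx
  refine ((((hasDerivAt_arcsin hx'.1.ne' hx'.2.ne).add
    ((hasDerivAt_sqrt_one_sub_sq hx).const_mul r)).sub
    (hasDerivAt_sqrt_mul_arcsin_mobius hr hx)).const_mul (2 / π)).congr_deriv ?_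
  have hden' : 1 + x * r ≠ 0 := by rw [mul_comm]; exact hden.ne'
  field_simp
  linear_combination (-(r ^ 2)) * hsq

lemma continuousOn_semicirclePrimitive {r : ℝ} (hr : |r| ≤ 1) :
    ContinuousOn (semicirclePrimitive r) (Icc (-1) 1) := by
  have hsqrt : Continuous fun y : ℝ => √(1 - y ^ 2) := by fun_prop
  rcases hr.lt_or_eq with hr | hr
  · have hden : ∀ y ∈ Icc (-1 : ℝ) 1, 1 + r * y ≠ 0 := fun y hy => by
      rw [mul_comm]
      exact (one_add_mul_pos_of_abs_le_of_abs_lt (abs_le.2 hy) hr).ne'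
    have hmob : ContinuousOn (fun y : ℝ => (y + r) / (1 + r * y)) (Icc (-1) 1) :=
      ContinuousOn.div (by fun_prop) (by fun_prop) hden
    exact continuousOn_const.mul ((continuous_arcsin.continuousOn.add
      (continuousOn_const.mul hsqrt.continuousOn)).sub
      (continuousOn_const.mul (continuous_arcsin.comp_continuousOn hmob)))
  · have hr2 : 1 - r ^ 2 = 0 := by rw [← sq_abs, hr]; norm_num
    have : Continuous fun y => 2 / π * (arcsin y + r * √(1 - y ^ 2)) := by fun_prop
    exact this.continuousOn.congr fun y _ => by simp [semicirclePrimitive, hr2]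

lemma semicirclePrimitive_one {r : ℝ} (hr : |r| ≤ 1) :
    semicirclePrimitive r 1 = 1 - √(1 - r ^ 2) := by
  have : √(1 - r ^ 2) * arcsin ((1 + r) / (1 + r * 1)) = √(1 - r ^ 2) * (π / 2) := by
    rcases eq_or_ne r (-1) with rfl | hr1
    · norm_num
    · rw [mul_one, div_self (fun h => hr1 (by linarith)), arcsin_one]
  simp only [semicirclePrimitive, arcsin_one, this]
  field_simp
  ring

lemma semicirclePrimitive_neg_one {r : ℝ} (hr : |r| ≤ 1) :
    semicirclePrimitive r (-1) = √(1 - r ^ 2) - 1 := by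
  have : √(1 - r ^ 2) * arcsin ((-1 + r) / (1 + r * -1)) = √(1 - r ^ 2) * -(π / 2) := by
    rcases eq_or_ne r 1 with rfl | hr1
    · norm_num
    · have hmob : (-1 + r) / (1 + r * -1) = -1 := by
        rw [div_eq_iff (fun h => hr1 (by linarith))]
        ring
      rw [hmob, arcsin_neg_one]
  simp only [semicirclePrimitive, arcsin_neg_one, this]
  field_simp
  ring

theorem integral_sq_div_one_add_mul_semicircle {r : ℝ} (hr : |r| ≤ 1) :
    ∫ σ in (-1 : ℝ)..1, r ^ 2 / (1 + r * σ) * (2 / π * √(1 - σ ^ 2)) =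
      2 * (1 - √(1 - r ^ 2)) := by
  have hcont := continuousOn_semicirclePrimitive hr
  have hderiv : ∀ x ∈ Ioo (-1 : ℝ) 1, HasDerivAt (semicirclePrimitive r)
      (r ^ 2 / (1 + r * x) * (2 / π * √(1 - x ^ 2))) x :=
    fun x hx => hasDerivAt_semicirclePrimitive hr (abs_lt.2 hx)
  have hint : IntervalIntegrable (fun x => r ^ 2 / (1 + r * x) * (2 / π * √(1 - x ^ 2)))
      MeasureTheory.volume (-1) 1 := by
    refine intervalIntegrable_deriv_of_nonneg (g := semicirclePrimitive r) ?_ ?_ ?_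
    · simpa [uIcc_of_le] using hcont
    · simpa using hderiv
    · intro x hx
      have := one_add_mul_pos_of_abs_le_of_abs_lt hr (abs_lt.2 (by simpa using hx))
      positivity
  rw [integral_eq_sub_of_hasDerivAt_of_le (by norm_num) hcont hderiv hint,
    semicirclePrimitive_one hr, semicirclePrimitive_neg_one hr]
  ring

/-- For every r ∈ [−1, 1], the integral over σ ∈ [−1, 1] of −r²/(1 + rσ) against the
normalized semicircular density (2/π)√(1 − σ²) equals 2(√(1 − r²) − 1). -/
theorem stmt_2 (r : ℝ) (hr : r ∈ Set.Icc (-1 : ℝ) 1) :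
    ∫ σ in (-1 : ℝ)..1, (-(r ^ 2) / (1 + r * σ)) * (2 / Real.pi * Real.sqrt (1 - σ ^ 2)) =
      2 * (Real.sqrt (1 - r ^ 2) - 1) := by
  simp_rw [neg_div, neg_mul]
  rw [integral_neg, integral_sq_div_one_add_mul_semicircle (abs_le.2 hr)]
  ring
end

section
/- Let a ∈ ℝⁿ with all coordinates strictly positive and n ≥ 2. Then min over x ∈ [−1,1]ⁿ of the function f(x) = (aᵀx)² + max_{i∈[n]} ( aᵢ√(1−xᵢ²) − ∑_{j≠i} aⱼ√(1−xⱼ²) )₊² equals zero if and only if a is balanced, i.e., aᵢ ≤ ∑_{j≠i} aⱼ for all i ∈ [n]. -/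
/-! For `x ∈ [-1, 1]ⁿ` put `sⱼ = √(1 - xⱼ²)`, so that `aⱼ (xⱼ + i sⱼ)` is a point of the upper
half plane of modulus `aⱼ`. If `aᵢ > S := ∑_{j ≠ i} aⱼ`, compare `p = aᵢ (xᵢ + i sᵢ)` with
`q = ∑_{j ≠ i} aⱼ (-xⱼ + i sⱼ)`, which has modulus at most `S`: the two squared terms of the
objective with index `i` are at least the squared distance from `p` to `q` with its imaginary
part lowered to `min (Im p) (Im q)`, a point of modulus at most `S`. Hence the objective is at
least `(aᵢ - S)² > 0` on the whole cube. Conversely, if `a` is balanced the objective vanishes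
at `x = 0`. -/

open Finset

namespace Complex

lemma norm_mk_mul_of_sq_add_sq_eq_one {c u v : ℝ} (hc : 0 ≤ c) (h : u ^ 2 + v ^ 2 = 1) :
    ‖(⟨c * u, c * v⟩ : ℂ)‖ = c := by
  rw [norm_def, normSq_mk, show c * u * (c * u) + c * v * (c * v) = c ^ 2 by
    linear_combination c ^ 2 * h]
  exact Real.sqrt_sq hc

lemma norm_mk_re_le_of_abs_le {q : ℂ} {t : ℝ} (h : |t| ≤ |q.im|) : ‖(⟨q.re, t⟩ : ℂ)‖ ≤ ‖q‖ := by
  rw [norm_def, norm_def, normSq_mk, normSq_apply]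
  exact Real.sqrt_le_sqrt (by nlinarith [sq_le_sq.2 h])

lemma norm_sub_norm_le_sqrt_sq_add_max_sq {p q : ℂ} (hp : 0 ≤ p.im) (hq : 0 ≤ q.im) :
    ‖p‖ - ‖q‖ ≤ Real.sqrt ((p.re - q.re) ^ 2 + max (p.im - q.im) 0 ^ 2) := by
  set q' : ℂ := ⟨q.re, min p.im q.im⟩
  have hq' : ‖q'‖ ≤ ‖q‖ := norm_mk_re_le_of_abs_le <| by
    rw [abs_of_nonneg (le_min hp hq), abs_of_nonneg hq]
    exact min_le_right _ _
  have hdist : ‖p - q'‖ = Real.sqrt ((p.re - q.re) ^ 2 + max (p.im - q.im) 0 ^ 2) := by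
    rw [norm_def, normSq_apply, sub_re, sub_im, ← max_sub_sub_left, sub_self, max_comm]
    simp only [q', pow_two]
  calc ‖p‖ - ‖q‖ ≤ ‖p‖ - ‖q'‖ := by linarith
    _ ≤ ‖p - q'‖ := norm_sub_norm_le p q'
    _ = _ := hdist

end Complex

section SDPObjective

variable {n : ℕ}

noncomputable def sdpObjective (a x : Fin n → ℝ) : ℝ :=
  (∑ i, a i * x i) ^ 2 +
    ⨆ i : Fin n, (max (a i * Real.sqrt (1 - x i ^ 2) -
      ∑ j ∈ univ.erase i, a j * Real.sqrt (1 - x j ^ 2)) 0) ^ 2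

lemma sdpObjective_nonneg (a x : Fin n → ℝ) : 0 ≤ sdpObjective a x :=
  add_nonneg (sq_nonneg _) (Real.iSup_nonneg fun _ => sq_nonneg _)

lemma sdpObjective_zero_of_balanced {a : Fin n → ℝ} (h : ∀ i, a i ≤ ∑ j ∈ univ.erase i, a j) :
    sdpObjective a 0 = 0 := by
  simp only [sdpObjective, Pi.zero_apply, mul_zero, sum_const_zero, ne_eq, OfNat.ofNat_ne_zero,
    not_false_eq_true, zero_pow, sub_zero, Real.sqrt_one, mul_one,
    max_eq_right (sub_nonpos.2 (h _)), Real.iSup_const_zero, add_zero]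

lemma sq_sub_le_sdpObjective {a x : Fin n → ℝ} (ha : ∀ i, 0 ≤ a i)
    (hx : ∀ i, x i ∈ Set.Icc (-1 : ℝ) 1) {i : Fin n} (hi : ∑ j ∈ univ.erase i, a j ≤ a i) :
    (a i - ∑ j ∈ univ.erase i, a j) ^ 2 ≤ sdpObjective a x := by
  set s : Fin n → ℝ := fun j => Real.sqrt (1 - x j ^ 2)
  have hs : ∀ j, x j ^ 2 + s j ^ 2 = 1 := fun j => by
    rw [Real.sq_sqrt (by nlinarith [(hx j).1, (hx j).2])]
    ring
  set p : ℂ := ⟨a i * x i, a i * s i⟩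
  set q : ℂ := ∑ j ∈ univ.erase i, ⟨a j * -x j, a j * s j⟩
  have hp : ‖p‖ = a i := Complex.norm_mk_mul_of_sq_add_sq_eq_one (ha i) (hs i)
  have hq : ‖q‖ ≤ ∑ j ∈ univ.erase i, a j :=
    (norm_sum_le _ _).trans_eq <| sum_congr rfl fun j _ =>
      Complex.norm_mk_mul_of_sq_add_sq_eq_one (ha j) (by rw [neg_sq]; exact hs j)
  have hre : p.re - q.re = ∑ j, a j * x j := by
    simp only [p, q, Complex.re_sum, mul_neg, sum_neg_distrib, sub_neg_eq_add]
    exact add_sum_erase _ (fun j => a j * x j) (mem_univ i)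
  have him : p.im - q.im = a i * s i - ∑ j ∈ univ.erase i, a j * s j := by
    simp only [p, q, Complex.im_sum]
  have hmodulus := Complex.norm_sub_norm_le_sqrt_sq_add_max_sq (p := p) (q := q)
    (mul_nonneg (ha i) (Real.sqrt_nonneg _))
    (by rw [Complex.im_sum]; exact sum_nonneg fun j _ => mul_nonneg (ha j) (Real.sqrt_nonneg _))
  rw [hp, hre, him] at hmodulus
  calc (a i - ∑ j ∈ univ.erase i, a j) ^ 2
      ≤ (∑ j, a j * x j) ^ 2 + max (a i * s i - ∑ j ∈ univ.erase i, a j * s j) 0 ^ 2 :=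
        (Real.le_sqrt (sub_nonneg.2 hi) (by positivity)).1 (by linarith)
    _ ≤ sdpObjective a x := by
        unfold sdpObjective
        gcongr
        exact le_ciSup (f := fun k => max (a k * s k - ∑ j ∈ univ.erase k, a j * s j) 0 ^ 2)
          (Finite.bddAbove_range _) i

end SDPObjective

open Finset in
theorem stmt_9_general (n : ℕ) (a : Fin n → ℝ) (ha : ∀ i, 0 < a i) :
    sInf ((fun x : Fin n → ℝ =>
        (∑ i, a i * x i) ^ 2 +
          ⨆ i : Fin n, (max (a i * Real.sqrt (1 - x i ^ 2) -
            ∑ j ∈ univ.erase i, a j * Real.sqrt (1 - x j ^ 2)) 0) ^ 2) ''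
        {x : Fin n → ℝ | ∀ i, x i ∈ Set.Icc (-1 : ℝ) 1}) = 0 ↔
      ∀ i, a i ≤ ∑ j ∈ univ.erase i, a j := by
  set cube := {x : Fin n → ℝ | ∀ i, x i ∈ Set.Icc (-1 : ℝ) 1}
  have hzero : (0 : Fin n → ℝ) ∈ cube := fun _ => by simp
  change sInf (sdpObjective a '' cube) = 0 ↔ _
  constructor
  · intro hmin i
    by_contra! hunbalanced
    have hbound : (a i - ∑ j ∈ univ.erase i, a j) ^ 2 ≤ sInf (sdpObjective a '' cube) :=
      le_csInf ⟨_, Set.mem_image_of_mem _ hzero⟩ <| Set.forall_mem_image.2 fun x hx =>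
        sq_sub_le_sdpObjective (fun j => (ha j).le) hx hunbalanced.le
    have := pow_pos (sub_pos.2 hunbalanced) 2
    linarith
  · intro hbalanced
    refine IsLeast.csInf_eq ⟨⟨0, hzero, sdpObjective_zero_of_balanced hbalanced⟩, ?_⟩
    exact Set.forall_mem_image.2 fun x _ => sdpObjective_nonneg a x

open Finset in
/-- Let a ∈ ℝⁿ₊₊, n ≥ 2. Then the minimum over x ∈ [−1,1]ⁿ of
f(x) = (aᵀx)² + max_i ( aᵢ√(1−xᵢ²) − ∑_{j≠i} aⱼ√(1−xⱼ²) )₊² equals zero if and only if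
a is balanced, i.e. aᵢ ≤ ∑_{j≠i} aⱼ for all i. -/
theorem stmt_9 (n : ℕ) (hn : 2 ≤ n) (a : Fin n → ℝ) (ha : ∀ i, 0 < a i) :
    sInf ((fun x : Fin n → ℝ =>
        (∑ i, a i * x i) ^ 2 +
          ⨆ i : Fin n, (max (a i * Real.sqrt (1 - x i ^ 2) -
            ∑ j ∈ univ.erase i, a j * Real.sqrt (1 - x j ^ 2)) 0) ^ 2) ''
        {x : Fin n → ℝ | ∀ i, x i ∈ Set.Icc (-1 : ℝ) 1}) = 0 ↔
      ∀ i, a i ≤ ∑ j ∈ univ.erase i, a j :=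
  stmt_9_general n a ha
end

section
/- Let a ∈ ℝⁿ₊₊ and suppose x ∈ [−1,1]ⁿ. Fix i = n and write bⱼ = xⱼ² − 1 ≤ 0. Then sup over γ ∈ N_n of ⟨γ, b⟩ equals ( a_n√(−b_n) − ∑_{j<n} aⱼ√(−bⱼ) )₊², where N_n = {γ ∈ ℝⁿ : 0 > γ_n ≥ −a_n²/(1 + ∑_{j<n} aⱼ²/γⱼ), γⱼ > 0 ∀ j < n}. -/
/-!
Write `c = a_{i₀}√(-b_{i₀})`, `A = ∑_{j≠i₀} aⱼ√(-bⱼ)`, `S = ∑_{j≠i₀} aⱼ²/γⱼ` and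
`B = ∑_{j≠i₀} γⱼ(-bⱼ)`. Since `b_{i₀} ≤ 0`, the objective is at most `c²/(1 + S) - B`, and
Cauchy–Schwarz gives `A² ≤ S B`; together with `c ≤ (c - A)₊ + A` this bounds the objective by
`(c - A)₊²`. Conversely the multipliers `γⱼ = r aⱼ/(√(-bⱼ) + δ)` achieve at least
`r (c²/(r + Q) - Q)` with `Q = A + δ ∑_{j≠i₀} aⱼ`; letting `δ → 0` with `r = c - Q` when `c > A`,
and `r → 0` otherwise, recovers `(c - A)₊²`.
-/

open Finset Filter Topology

lemma sq_sum_mul_sqrt_le {ι : Type*} (s : Finset ι) (a γ β : ι → ℝ) (hγ : ∀ j ∈ s, 0 < γ j)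
    (hβ : ∀ j ∈ s, 0 ≤ β j) :
    (∑ j ∈ s, a j * √(β j)) ^ 2 ≤ (∑ j ∈ s, a j ^ 2 / γ j) * ∑ j ∈ s, γ j * β j :=
  sum_sq_le_sum_mul_sum_of_sq_le_mul s (fun j hj => div_nonneg (sq_nonneg _) (hγ j hj).le)
    (fun j hj => mul_nonneg (hγ j hj).le (hβ j hj)) fun j hj => le_of_eq <| by
      rw [mul_pow, Real.sq_sqrt (hβ j hj)]
      field_simp [(hγ j hj).ne']

variable {ι : Type*} [Fintype ι] [DecidableEq ι]

/-- The piece `N_{i₀}` of the projective Lagrange multiplier set of the partition QCQP. -/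
def partitionMultipliers (a : ι → ℝ) (i₀ : ι) : Set (ι → ℝ) :=
  {γ | (∀ j, j ≠ i₀ → 0 < γ j) ∧ γ i₀ < 0 ∧
    -(a i₀) ^ 2 / (1 + ∑ j ∈ univ.erase i₀, a j ^ 2 / γ j) ≤ γ i₀}

noncomputable def partitionValue (a b : ι → ℝ) (i₀ : ι) : ℝ :=
  max (a i₀ * √(-b i₀) - ∑ j ∈ univ.erase i₀, a j * √(-b j)) 0 ^ 2

/-- Cauchy–Schwarz for the vectors `(1, √S)` and `(t, A/√S)`. -/
lemma add_sq_le_one_add_mul {t A B S : ℝ} (hS : 0 ≤ S) (hB : 0 ≤ B) (hAB : A ^ 2 ≤ S * B) :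
    (t + A) ^ 2 ≤ (1 + S) * (t ^ 2 + B) := by
  rcases hS.eq_or_lt with rfl | hS
  · nlinarith
  · have : 0 ≤ B + S * t ^ 2 - 2 * t * A := by nlinarith [sq_nonneg (S * t - A)]
    nlinarith

lemma sq_le_one_add_mul_max_sub_sq {c A B S : ℝ} (hc : 0 ≤ c) (hS : 0 ≤ S) (hB : 0 ≤ B)
    (hAB : A ^ 2 ≤ S * B) : c ^ 2 ≤ (1 + S) * (max (c - A) 0 ^ 2 + B) := by
  have hle : c ≤ max (c - A) 0 + A := by linarith [le_max_left (c - A) 0]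
  exact (pow_le_pow_left₀ hc hle 2).trans (add_sq_le_one_add_mul hS hB hAB)

lemma sum_mul_le_partitionValue {a b γ : ι → ℝ} {i₀ : ι} (ha : ∀ i, 0 < a i)
    (hb : ∀ j, b j ≤ 0) (hγ : γ ∈ partitionMultipliers a i₀) :
    ∑ j, γ j * b j ≤ partitionValue a b i₀ := by
  obtain ⟨hpos, -, hbound⟩ := hγ
  set S := ∑ j ∈ univ.erase i₀, a j ^ 2 / γ j
  set B := ∑ j ∈ univ.erase i₀, γ j * -b j
  have hγE : ∀ j ∈ univ.erase i₀, 0 < γ j := fun j hj => hpos j (ne_of_mem_erase hj)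
  have hS : 0 ≤ S := sum_nonneg fun j hj => div_nonneg (sq_nonneg _) (hγE j hj).le
  have hB : 0 ≤ B := sum_nonneg fun j hj => mul_nonneg (hγE j hj).le (neg_nonneg.2 (hb j))
  have hCS : (∑ j ∈ univ.erase i₀, a j * √(-b j)) ^ 2 ≤ S * B :=
    sq_sum_mul_sqrt_le _ a γ (fun j => -b j) hγE fun j _ => neg_nonneg.2 (hb j)
  have key := sq_le_one_add_mul_max_sub_sq
    (mul_nonneg (ha i₀).le (Real.sqrt_nonneg (-b i₀))) hS hB hCS
  rw [mul_pow, Real.sq_sqrt (neg_nonneg.2 (hb i₀))] at key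
  have hlast : γ i₀ * b i₀ ≤ a i₀ ^ 2 * -b i₀ / (1 + S) :=
    calc γ i₀ * b i₀ ≤ -a i₀ ^ 2 / (1 + S) * b i₀ := mul_le_mul_of_nonpos_right hbound (hb i₀)
      _ = a i₀ ^ 2 * -b i₀ / (1 + S) := by ring
  have hsplit : ∑ j, γ j * b j = γ i₀ * b i₀ - B := by
    rw [← add_sum_erase _ _ (mem_univ i₀), sub_eq_add_neg, ← sum_neg_distrib]
    simp only [mul_neg, neg_neg]
  have hdiv : a i₀ ^ 2 * -b i₀ / (1 + S) ≤ partitionValue a b i₀ + B :=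
    (div_le_iff₀ (by linarith)).2 (by rw [partitionValue]; linarith)
  rw [hsplit]
  linarith

lemma exists_mem_partitionMultipliers_le_sum_mul {a b w : ι → ℝ} {i₀ : ι} (ha : ∀ i, 0 < a i)
    (hb : ∀ j, b j ≤ 0) (hw : ∀ j, 0 < w j) (hbw : ∀ j, √(-b j) ≤ w j) {r : ℝ} (hr : 0 < r) :
    ∃ γ ∈ partitionMultipliers a i₀,
      r * ((a i₀ * √(-b i₀)) ^ 2 / (r + ∑ j ∈ univ.erase i₀, a j * w j) -
        ∑ j ∈ univ.erase i₀, a j * w j) ≤ ∑ j, γ j * b j := by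
  set Q := ∑ j ∈ univ.erase i₀, a j * w j
  have hQ : 0 ≤ Q := sum_nonneg fun j _ => (mul_pos (ha j) (hw j)).le
  set γ : ι → ℝ := Function.update (fun j => r * a j / w j) i₀ (-a i₀ ^ 2 / (1 + Q / r))
  have hγi₀ : γ i₀ = -a i₀ ^ 2 / (1 + Q / r) := Function.update_self ..
  have hγ : ∀ j, j ≠ i₀ → γ j = r * a j / w j := fun j hj => Function.update_of_ne hj ..
  have hS : ∑ j ∈ univ.erase i₀, a j ^ 2 / γ j = Q / r := by
    rw [sum_div]
    refine sum_congr rfl fun j hj => ?_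
    rw [hγ j (ne_of_mem_erase hj)]
    field_simp [(ha j).ne', (hw j).ne']
  have hterm : ∀ j, j ≠ i₀ → -(r * (a j * w j)) ≤ γ j * b j := fun j hj => by
    have hsq : -b j ≤ w j ^ 2 := by
      rw [← Real.sq_sqrt (neg_nonneg.2 (hb j))]
      exact pow_le_pow_left₀ (Real.sqrt_nonneg _) (hbw j) 2
    rw [hγ j hj, div_mul_eq_mul_div, le_div_iff₀ (hw j)]
    nlinarith [mul_pos hr (ha j)]
  refine ⟨γ, ⟨fun j hj => ?_, ?_, ?_⟩, ?_⟩
  · rw [hγ j hj]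
    exact div_pos (mul_pos hr (ha j)) (hw j)
  · rw [hγi₀]
    exact div_neg_of_neg_of_pos (neg_lt_zero.2 (pow_pos (ha i₀) 2)) (by positivity)
  · rw [hS, hγi₀]
  · rw [← add_sum_erase _ _ (mem_univ i₀), hγi₀]
    have hrest : -(r * Q) ≤ ∑ j ∈ univ.erase i₀, γ j * b j := by
      rw [mul_sum, ← sum_neg_distrib]
      exact sum_le_sum fun j hj => hterm j (ne_of_mem_erase hj)
    have hlast : -a i₀ ^ 2 / (1 + Q / r) * b i₀ = r * (a i₀ * √(-b i₀)) ^ 2 / (r + Q) := by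
      rw [mul_pow, Real.sq_sqrt (neg_nonneg.2 (hb i₀))]
      field_simp
    rw [hlast, mul_sub, mul_div_assoc]
    linarith

lemma partitionValue_le_sSup {a b : ι → ℝ} {i₀ : ι} (ha : ∀ i, 0 < a i) (hb : ∀ j, b j ≤ 0) :
    partitionValue a b i₀ ≤ sSup ((fun γ => ∑ j, γ j * b j) '' partitionMultipliers a i₀) := by
  set V := (fun γ => ∑ j, γ j * b j) '' partitionMultipliers a i₀
  set c := a i₀ * √(-b i₀)
  set A := ∑ j ∈ univ.erase i₀, a j * √(-b j)
  set α := ∑ j ∈ univ.erase i₀, a j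
  have hbdd : BddAbove V :=
    ⟨_, Set.forall_mem_image.2 fun γ hγ => sum_mul_le_partitionValue ha hb hγ⟩
  have hwit : ∀ r > 0, ∀ δ > 0, r * (c ^ 2 / (r + (A + δ * α)) - (A + δ * α)) ≤ sSup V := by
    intro r hr δ hδ
    obtain ⟨γ, hγ, hle⟩ := exists_mem_partitionMultipliers_le_sum_mul
      (w := fun j => √(-b j) + δ) ha hb (fun j => by positivity) (fun j => by simp [hδ.le]) hr
    have hQ : ∑ j ∈ univ.erase i₀, a j * (√(-b j) + δ) = A + δ * α := by
      simp only [mul_add, sum_add_distrib, ← sum_mul, A, α, mul_comm δ]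
    rw [hQ] at hle
    exact hle.trans (le_csSup hbdd (Set.mem_image_of_mem _ hγ))
  have hA : 0 ≤ A := sum_nonneg fun j _ => mul_nonneg (ha j).le (Real.sqrt_nonneg _)
  have hα : 0 ≤ α := sum_nonneg fun j _ => (ha j).le
  rcases le_or_gt c A with hcA | hAc
  · rw [partitionValue, max_eq_right (sub_nonpos.2 hcA), zero_pow two_ne_zero]
    have hlim : Tendsto (fun r : ℝ => -(r * (A + α))) (𝓝[>] 0) (𝓝 0) :=
      ((by fun_prop : Continuous fun r : ℝ => -(r * (A + α))).tendsto' 0 0 (by simp)).mono_left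
        nhdsWithin_le_nhds
    refine le_of_tendsto hlim ?_
    filter_upwards [self_mem_nhdsWithin] with r (hr : 0 < r)
    have hgain : 0 ≤ r * (c ^ 2 / (r + (A + 1 * α))) := by positivity
    have := hwit r hr 1 one_pos
    rw [mul_sub] at this
    linarith
  · rw [partitionValue, max_eq_left (sub_nonneg.2 hAc.le)]
    have hQ : Tendsto (fun δ : ℝ => A + δ * α) (𝓝[>] 0) (𝓝 A) :=
      ((by fun_prop : Continuous fun δ : ℝ => A + δ * α).tendsto' 0 A (by simp)).mono_left
        nhdsWithin_le_nhds
    refine le_of_tendsto ((tendsto_const_nhds.sub hQ).pow 2) ?_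
    filter_upwards [self_mem_nhdsWithin, hQ.eventually (gt_mem_nhds hAc)] with δ (hδ : 0 < δ) hlt
    calc (c - (A + δ * α)) ^ 2
        = (c - (A + δ * α)) * (c ^ 2 / (c - (A + δ * α) + (A + δ * α)) - (A + δ * α)) := by
          rw [sub_add_cancel, sq c, mul_self_div_self]; ring
      _ ≤ sSup V := hwit _ (sub_pos.2 hlt) δ hδ

theorem sSup_sum_mul_partitionMultipliers {a b : ι → ℝ} {i₀ : ι} (ha : ∀ i, 0 < a i)
    (hb : ∀ j, b j ≤ 0) :
    sSup ((fun γ => ∑ j, γ j * b j) '' partitionMultipliers a i₀) = partitionValue a b i₀ :=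
  le_antisymm
    (Real.sSup_le (Set.forall_mem_image.2 fun _ hγ => sum_mul_le_partitionValue ha hb hγ)
      (sq_nonneg _))
    (partitionValue_le_sSup ha hb)

open Finset in
theorem stmt_10_general (n : ℕ) (a : Fin (n + 1) → ℝ) (ha : ∀ i, 0 < a i)
    (x : Fin (n + 1) → ℝ) (hx : ∀ i, x i ∈ Set.Icc (-1 : ℝ) 1)
    (b : Fin (n + 1) → ℝ) (hb : ∀ j, b j = x j ^ 2 - 1) :
    sSup {s : ℝ | ∃ γ : Fin (n + 1) → ℝ,
        (∀ j, j ≠ Fin.last n → 0 < γ j) ∧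
        γ (Fin.last n) < 0 ∧
        γ (Fin.last n) ≥
          -(a (Fin.last n)) ^ 2 / (1 + ∑ j ∈ univ.erase (Fin.last n), (a j) ^ 2 / γ j) ∧
        s = ∑ j, γ j * b j} =
      (max (a (Fin.last n) * Real.sqrt (-(b (Fin.last n))) -
        ∑ j ∈ univ.erase (Fin.last n), a j * Real.sqrt (-(b j))) 0) ^ 2 := by
  have hb_nonpos : ∀ j, b j ≤ 0 := fun j => by
    rw [hb j]
    nlinarith [(hx j).1, (hx j).2]
  refine (congrArg sSup (Set.ext fun s => ?_)).trans
    (sSup_sum_mul_partitionMultipliers ha hb_nonpos)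
  exact ⟨fun ⟨γ, h₁, h₂, h₃, hs⟩ => ⟨γ, ⟨h₁, h₂, h₃⟩, hs.symm⟩,
    fun ⟨γ, ⟨h₁, h₂, h₃⟩, hs⟩ => ⟨γ, h₁, h₂, h₃, hs.symm⟩⟩

open Finset in
/-- Partition sup calculation (Lemma A.2). With a ∈ ℝ^{n+1}₊₊, x ∈ [−1,1]^{n+1},
bⱼ = xⱼ² − 1 and i₀ the last index, the supremum over γ ∈ N_{i₀} of ⟨γ, b⟩ equals
( a_{i₀}√(−b_{i₀}) − ∑_{j≠i₀} aⱼ√(−bⱼ) )₊². -/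
theorem stmt_10 (n : ℕ) (hn : 1 ≤ n) (a : Fin (n + 1) → ℝ) (ha : ∀ i, 0 < a i)
    (x : Fin (n + 1) → ℝ) (hx : ∀ i, x i ∈ Set.Icc (-1 : ℝ) 1)
    (b : Fin (n + 1) → ℝ) (hb : ∀ j, b j = x j ^ 2 - 1) :
    sSup {s : ℝ | ∃ γ : Fin (n + 1) → ℝ,
        (∀ j, j ≠ Fin.last n → 0 < γ j) ∧
        γ (Fin.last n) < 0 ∧
        γ (Fin.last n) ≥
          -(a (Fin.last n)) ^ 2 / (1 + ∑ j ∈ univ.erase (Fin.last n), (a j) ^ 2 / γ j) ∧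
        s = ∑ j, γ j * b j} =
      (max (a (Fin.last n) * Real.sqrt (-(b (Fin.last n))) -
        ∑ j ∈ univ.erase (Fin.last n), a j * Real.sqrt (-(b j))) 0) ^ 2 :=
  stmt_10_general n a ha x hx b hb
end

section
/- Let a ∈ ℝⁿ with a_j > 0 for all j, n ≥ 2, and γ ∈ ℝⁿ with γ_n < 0 and γⱼ > 0 for j < n. Then the matrix aaᵀ + Diag(γ) is positive semidefinite if and only if γ_n ≥ −a_n² / (1 + ∑_{j<n} aⱼ²/γⱼ). -/
/-!
Write `q(x) = (a ⬝ᵥ x)² + ∑ⱼ γⱼ xⱼ²` for the quadratic form of `aaᵀ + Diag(γ)` and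
`S = ∑_{j ≠ k} aⱼ²/γⱼ`. Since `a_k x_k = a ⬝ᵥ x - ∑_{j ≠ k} aⱼ xⱼ`, Cauchy–Schwarz with the
positive weights `γⱼ` gives `(a_k x_k)² ≤ (1 + S) ((a ⬝ᵥ x)² + ∑_{j ≠ k} γⱼ xⱼ²)`, that is
`q(x) ≥ x_k² (γ_k + a_k²/(1 + S))`. Equality holds at `x_k = 1`, `xⱼ = -t aⱼ/γⱼ` with
`t = a_k/(1 + S)` (the minimiser of `q` on `x_k = 1`), so `q ≥ 0` exactly when the Schur
complement `γ_k + a_k²/(1 + S)` is nonnegative.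
-/

open Finset Matrix

theorem sq_add_le_one_add_mul_sq_add {A r f g : ℝ} (hf : 0 ≤ f) (hg : 0 ≤ g)
    (hr : r ^ 2 ≤ f * g) : (A + r) ^ 2 ≤ (1 + f) * (A ^ 2 + g) := by
  have hAr : 2 * (A * r) ≤ f * A ^ 2 + g :=
    two_mul_le_add_of_sq_le_mul (by positivity) hg (by nlinarith [sq_nonneg A])
  nlinarith

theorem Finset.sq_sum_mul_le_sum_sq_div_mul_sum_mul_sq {ι : Type*} (s : Finset ι)
    (b y : ι → ℝ) {c : ι → ℝ} (hc : ∀ j ∈ s, 0 < c j) :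
    (∑ j ∈ s, b j * y j) ^ 2 ≤ (∑ j ∈ s, b j ^ 2 / c j) * ∑ j ∈ s, c j * y j ^ 2 :=
  sum_sq_le_sum_mul_sum_of_sq_le_mul s (fun j hj => div_nonneg (sq_nonneg _) (hc j hj).le)
    (fun j hj => mul_nonneg (hc j hj).le (sq_nonneg _))
    (fun j hj => le_of_eq (by field_simp [(hc j hj).ne']))

variable {ι : Type*} [Fintype ι] [DecidableEq ι]

theorem dotProduct_mulVec_vecMulVec_self_add_diagonal (a γ x : ι → ℝ) :
    x ⬝ᵥ (vecMulVec a a + diagonal γ) *ᵥ x = (a ⬝ᵥ x) ^ 2 + ∑ j, γ j * x j ^ 2 := by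
  simp only [add_mulVec, dotProduct_add]
  congr 1
  · simp [vecMulVec_mulVec, dotProduct_comm, sq]
  · simp [dotProduct, mulVec_diagonal, sq, mul_left_comm]

section

variable (a γ : ι → ℝ) {k : ι}

theorem sq_mul_le_sq_dotProduct_add_sum_mul_sq (hγ : ∀ j, j ≠ k → 0 < γ j) (x : ι → ℝ) :
    x k ^ 2 * (γ k + a k ^ 2 / (1 + ∑ j ∈ univ.erase k, a j ^ 2 / γ j)) ≤
      (a ⬝ᵥ x) ^ 2 + ∑ j, γ j * x j ^ 2 := by
  set S := ∑ j ∈ univ.erase k, a j ^ 2 / γ j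
  set u := ∑ j ∈ univ.erase k, a j * x j
  set Q := ∑ j ∈ univ.erase k, γ j * x j ^ 2
  have hγ' : ∀ j ∈ univ.erase k, 0 < γ j := fun j hj => hγ j (ne_of_mem_erase hj)
  have hS : 0 ≤ S := sum_nonneg fun j hj => div_nonneg (sq_nonneg _) (hγ' j hj).le
  have hQ : 0 ≤ Q := sum_nonneg fun j hj => mul_nonneg (hγ' j hj).le (sq_nonneg _)
  have hdot : a ⬝ᵥ x = a k * x k + u := (add_sum_erase _ _ (mem_univ k)).symm
  have hsum : ∑ j, γ j * x j ^ 2 = γ k * x k ^ 2 + Q := (add_sum_erase _ _ (mem_univ k)).symm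
  have hCS : (a k * x k) ^ 2 ≤ (1 + S) * ((a ⬝ᵥ x) ^ 2 + Q) := by
    have hak : a k * x k = a ⬝ᵥ x + -u := by rw [hdot]; ring
    rw [hak]
    refine sq_add_le_one_add_mul_sq_add hS hQ ?_
    rw [neg_sq]
    exact (univ.erase k).sq_sum_mul_le_sum_sq_div_mul_sum_mul_sq a x hγ'
  have hdiv : (a k * x k) ^ 2 / (1 + S) ≤ (a ⬝ᵥ x) ^ 2 + Q := by
    rwa [div_le_iff₀' (by positivity)]
  calc x k ^ 2 * (γ k + a k ^ 2 / (1 + S)) = γ k * x k ^ 2 + (a k * x k) ^ 2 / (1 + S) := by ring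
    _ ≤ _ := by rw [hsum]; linarith

theorem exists_sq_dotProduct_add_sum_mul_sq_eq (hγ : ∀ j, j ≠ k → 0 < γ j) :
    ∃ x : ι → ℝ, (a ⬝ᵥ x) ^ 2 + ∑ j, γ j * x j ^ 2 =
      γ k + a k ^ 2 / (1 + ∑ j ∈ univ.erase k, a j ^ 2 / γ j) := by
  set S := ∑ j ∈ univ.erase k, a j ^ 2 / γ j
  have hS : 0 ≤ S := sum_nonneg fun j hj => div_nonneg (sq_nonneg _) (hγ j (ne_of_mem_erase hj)).le
  set t := a k / (1 + S) with ht
  set x : ι → ℝ := fun j => if j = k then 1 else -t * a j / γ j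
  refine ⟨x, ?_⟩
  have hdot : a ⬝ᵥ x = a k - t * S := by
    rw [dotProduct, ← add_sum_erase _ _ (mem_univ k), mul_sum, sub_eq_add_neg, ← sum_neg_distrib]
    refine congrArg₂ _ (by simp [x]) (sum_congr rfl fun j hj => ?_)
    simp only [x, if_neg (ne_of_mem_erase hj)]
    ring
  have hsum : ∑ j, γ j * x j ^ 2 = γ k + t ^ 2 * S := by
    rw [← add_sum_erase _ _ (mem_univ k), mul_sum]
    refine congrArg₂ _ (by simp [x]) (sum_congr rfl fun j hj => ?_)
    have hγj := (hγ j (ne_of_mem_erase hj)).ne'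
    simp only [x, if_neg (ne_of_mem_erase hj)]
    field_simp
  have h1S : 1 + S ≠ 0 := by linarith
  rw [hdot, hsum, ht]
  field_simp
  ring

theorem posSemidef_vecMulVec_self_add_diagonal_iff (hγ : ∀ j, j ≠ k → 0 < γ j) :
    (vecMulVec a a + diagonal γ).PosSemidef ↔
      -(a k) ^ 2 / (1 + ∑ j ∈ univ.erase k, a j ^ 2 / γ j) ≤ γ k := by
  rw [posSemidef_iff_dotProduct_mulVec, neg_div, neg_le_iff_add_nonneg]
  simp only [star_trivial, dotProduct_mulVec_vecMulVec_self_add_diagonal]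
  constructor
  · rintro ⟨-, hq⟩
    obtain ⟨x, hx⟩ := exists_sq_dotProduct_add_sum_mul_sq_eq a γ hγ
    exact hx ▸ hq x
  · intro h
    refine ⟨(posSemidef_vecMulVec_self_star a).isHermitian.add (isHermitian_diagonal γ),
      fun x => ?_⟩
    exact (mul_nonneg (sq_nonneg _) h).trans (sq_mul_le_sq_dotProduct_add_sum_mul_sq a γ hγ x)

end

open Finset in
theorem stmt_11_general (n : ℕ) (a : Fin (n + 1) → ℝ)
    (γ : Fin (n + 1) → ℝ)
    (hγ : ∀ j, j ≠ Fin.last n → 0 < γ j) :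
    (Matrix.of (fun i j => a i * a j) + Matrix.diagonal γ).PosSemidef ↔
      γ (Fin.last n) ≥
        -(a (Fin.last n)) ^ 2 / (1 + ∑ j ∈ univ.erase (Fin.last n), (a j) ^ 2 / γ j) :=
  posSemidef_vecMulVec_self_add_diagonal_iff a γ hγ

open Finset in
/-- Let a ∈ ℝ^{n+1} with strictly positive entries and γ with γ_{last} < 0 and γⱼ > 0 for
the other indices. Then aaᵀ + Diag(γ) ⪰ 0 iff
γ_{last} ≥ −a_{last}²/(1 + ∑_{j ≠ last} aⱼ²/γⱼ). -/
theorem stmt_11 (n : ℕ) (hn : 1 ≤ n) (a : Fin (n + 1) → ℝ) (ha : ∀ j, 0 < a j)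
    (γ : Fin (n + 1) → ℝ) (hγlast : γ (Fin.last n) < 0)
    (hγ : ∀ j, j ≠ Fin.last n → 0 < γ j) :
    (Matrix.of (fun i j => a i * a j) + Matrix.diagonal γ).PosSemidef ↔
      γ (Fin.last n) ≥
        -(a (Fin.last n)) ^ 2 / (1 + ∑ j ∈ univ.erase (Fin.last n), (a j) ^ 2 / γ j) :=
  stmt_11_general n a γ hγ
end

section
/- Let Ω ⊆ ℝⁿ be open and convex, f : Ω → ℝ convex and L-Lipschitz on a compact convex set C + B(0, 3ε) ⊆ Ω, and g : Ω → ℝ convex. Suppose N ⊆ C + B(0, 3ε) is a finite set such that every x ∈ C + B(0, 2ε) lies in conv(N ∩ B(x, ε)), and suppose |g(y) − f(y)| ≤ ε for all y ∈ N. Then |g(x) − f(x)| ≤ (4L + 4)ε for all x ∈ C. -/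
open Pointwise in
/-- Deterministic core of Lemma B.1: if f is convex and L-Lipschitz on C + B(0,3ε), g is
convex, N is a finite net such that every x ∈ C + B(0,2ε) is a convex combination of net
points within distance ε, and |g − f| ≤ ε on N, then |g − f| ≤ (4L + 4)ε on C. -/
theorem stmt_17 (n : ℕ) (Ω : Set (EuclideanSpace ℝ (Fin n)))
    (hΩopen : IsOpen Ω) (hΩconv : Convex ℝ Ω)
    (C : Set (EuclideanSpace ℝ (Fin n))) (hCcompact : IsCompact C) (hCconv : Convex ℝ C)
    (ε : ℝ) (hε : 0 < ε) (L : ℝ) (hL : 0 ≤ L)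
    (hCΩ : C + Metric.closedBall (0 : EuclideanSpace ℝ (Fin n)) (3 * ε) ⊆ Ω)
    (f g : EuclideanSpace ℝ (Fin n) → ℝ)
    (hfconv : ConvexOn ℝ Ω f) (hgconv : ConvexOn ℝ Ω g)
    (hfLip : ∀ x ∈ C + Metric.closedBall (0 : EuclideanSpace ℝ (Fin n)) (3 * ε),
      ∀ y ∈ C + Metric.closedBall (0 : EuclideanSpace ℝ (Fin n)) (3 * ε),
        |f x - f y| ≤ L * ‖x - y‖)
    (N : Finset (EuclideanSpace ℝ (Fin n)))
    (hNsub : (N : Set (EuclideanSpace ℝ (Fin n))) ⊆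
      C + Metric.closedBall (0 : EuclideanSpace ℝ (Fin n)) (3 * ε))
    (hNnet : ∀ x ∈ C + Metric.closedBall (0 : EuclideanSpace ℝ (Fin n)) (2 * ε),
      x ∈ convexHull ℝ ((N : Set (EuclideanSpace ℝ (Fin n))) ∩ Metric.closedBall x ε))
    (hNapprox : ∀ y ∈ N, |g y - f y| ≤ ε) :
    ∀ x ∈ C, |g x - f x| ≤ (4 * L + 4) * ε := by
  intro x hx
  set S3 : Set (EuclideanSpace ℝ (Fin n)) := C + Metric.closedBall (0 : EuclideanSpace ℝ (Fin n)) (3 * ε) with hS3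
  set S2 : Set (EuclideanSpace ℝ (Fin n)) := C + Metric.closedBall (0 : EuclideanSpace ℝ (Fin n)) (2 * ε) with hS2
  have hS23 : S2 ⊆ S3 :=
    Set.add_subset_add_left (Metric.closedBall_subset_closedBall (by linarith))
  have hS3Ω : S3 ⊆ Ω := hCΩ
  have hCS2 : C ⊆ S2 := by
    intro z hz
    exact Set.mem_add.mpr ⟨z, hz, 0, by simp [Metric.mem_closedBall]; positivity, by simp⟩
  -- key: for z in S2, find net point z' near z with g z ≤ g z'
  have key : ∀ z ∈ S2, ∃ z' ∈ (N : Set (EuclideanSpace ℝ (Fin n))), dist z' z ≤ ε ∧ g z ≤ g z' := by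
    intro z hz
    have hTΩ : ((N : Set (EuclideanSpace ℝ (Fin n))) ∩ Metric.closedBall z ε) ⊆ Ω :=
      fun w hw => hS3Ω (hNsub hw.1)
    obtain ⟨w, hw, hgw⟩ := hgconv.exists_ge_of_mem_convexHull hTΩ (hNnet z hz)
    exact ⟨w, hw.1, Metric.mem_closedBall.mp hw.2, hgw⟩
  have hxS2 : x ∈ S2 := hCS2 hx
  have hxS3 : x ∈ S3 := hS23 hxS2
  obtain ⟨x', hx'N, hx'dist, hgx⟩ := key x hxS2
  have hx'S3 : x' ∈ S3 := hNsub hx'N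
  -- f x' close to f x
  have hfx' : |f x' - f x| ≤ L * ε := by
    calc |f x' - f x| ≤ L * ‖x' - x‖ := hfLip x' hx'S3 x hxS3
    _ ≤ L * ε := by
      apply mul_le_mul_of_nonneg_left _ hL
      rw [← dist_eq_norm]; exact hx'dist
  have hgfx' := hNapprox x' hx'N
  -- Upper bound: g x ≤ f x + (L+1) ε
  have hupper : g x - f x ≤ (4 * L + 4) * ε := by
    have h1 : g x ≤ g x' := hgx
    have h2 := abs_le.mp hgfx'
    have h3 := abs_le.mp hfx'
    nlinarith
  -- Lower bound
  have hlower : f x - g x ≤ (4 * L + 4) * ε := by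
    -- reflected point
    set y : EuclideanSpace ℝ (Fin n) := x + (2 : ℝ) • (x' - x) with hy
    have hyx : y - x = (2 : ℝ) • (x' - x) := by rw [hy]; abel
    have hynorm : ‖y - x‖ ≤ 2 * ε := by
      rw [hyx, norm_smul]
      have : ‖x' - x‖ ≤ ε := by rw [← dist_eq_norm]; exact hx'dist
      simp only [Real.norm_ofNat]
      linarith
    have hyS2 : y ∈ S2 := by
      refine Set.mem_add.mpr ⟨x, hx, y - x, ?_, by abel⟩
      simpa [Metric.mem_closedBall, dist_eq_norm] using hynorm
    have hyS3 : y ∈ S3 := hS23 hyS2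
    have hyx' : y - x' = x' - x := by rw [hy]; module
    -- x' is midpoint of x and y
    have hmid : (1/2 : ℝ) • x + (1/2 : ℝ) • y = x' := by rw [hy]; module
    have hgmid : g x' ≤ (1/2) * g x + (1/2) * g y := by
      have := hgconv.2 (hS3Ω hxS3) (hS3Ω hyS3)
        (by norm_num : (0:ℝ) ≤ 1/2) (by norm_num : (0:ℝ) ≤ 1/2) (by norm_num)
      rwa [hmid] at this
    obtain ⟨y', hy'N, hy'dist, hgy⟩ := key y hyS2
    have hy'S3 : y' ∈ S3 := hNsub hy'N
    have hgfy' := abs_le.mp (hNapprox y' hy'N)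
    -- distance y' to x'
    have hdy'x' : ‖x' - y'‖ ≤ 2 * ε := by
      have h1 : dist x' y ≤ ε := by
        rw [dist_eq_norm, ← neg_sub, norm_neg, hyx', ← dist_eq_norm]
        exact hx'dist
      calc ‖x' - y'‖ = dist x' y' := (dist_eq_norm _ _).symm
      _ ≤ dist x' y + dist y y' := dist_triangle _ _ _
      _ ≤ ε + ε := add_le_add h1 (by rw [dist_comm]; exact hy'dist)
      _ = 2 * ε := by ring
    have hfx'y' : |f x' - f y'| ≤ L * (2 * ε) := by
      calc |f x' - f y'| ≤ L * ‖x' - y'‖ := hfLip x' hx'S3 y' hy'S3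
      _ ≤ L * (2 * ε) := mul_le_mul_of_nonneg_left hdy'x' hL
    have h3 := abs_le.mp hfx'
    have h4 := abs_le.mp (hNapprox x' hx'N)
    have h5 := abs_le.mp hfx'y'
    -- g x ≥ 2 g x' - g y ≥ 2 g x' - g y'
    nlinarith
  rw [abs_sub_le_iff]
  exact ⟨hupper, hlower⟩
end
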